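/- Let G be a finite simple graph in BP2 but not in BP1. Then there exists an integer l ≥ 0 such that: for every sequence of l distinct vertices v_1, …, v_l of G, each of the graphs G_0, G_1, …, G_l is in BP2 but not in BP1, where G_i is obtained from G by deleting v_1, …, v_i; none of G_0, …, G_{l−1} admits a star-biclique partition; and there exists a set of l vertices whose deletion from G yields a graph admitting a star-biclique partition. -/

import Mathlib

/-!
Take `l` to be the least size of a vertex set whose deletion leaves a graph with a
star-biclique partition; it exists because any two vertices split as a single vertex plus a
single vertex. By minimality no graph
obtained by deleting fewer than `l` vertices has such a partition, so the theorem reduces to one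
deletion step: a graph in BP2 \ BP1 without a star-biclique partition stays in BP2 \ BP1 after
deleting any vertex `v`. It is not in BP1 afterwards, since `{v}` plus a biclique would be a
star-biclique partition; and of its two biclique parts, the one containing `v` either is a star
centred at `v` (again a star-biclique partition) or is still a biclique without `v`.
-/

/-- The induced subgraph of `G` on the vertex set `s` is covered by a single biclique. -/
def BP1On {V : Type*} (G : SimpleGraph V) (s : Set V) : Prop :=
  (∃ v, s = {v}) ∨
    ∃ A B : Set V, A.Nonempty ∧ B.Nonempty ∧ Disjoint A B ∧ A ∪ B = s ∧
      ∀ a ∈ A, ∀ b ∈ B, G.Adj a b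

/-- The induced subgraph of `G` on `s` can be partitioned into at most two parts,
each of which induces a graph in BP1. -/
def BP2On {V : Type*} (G : SimpleGraph V) (s : Set V) : Prop :=
  BP1On G s ∨
    ∃ A B : Set V, A.Nonempty ∧ B.Nonempty ∧ Disjoint A B ∧ A ∪ B = s ∧
      BP1On G A ∧ BP1On G B

/-- The induced subgraph of `G` on `s` admits a star-biclique partition: a partition of `s`
into two nonempty parts `S` and `T` such that `S` is covered by a star of `G` and `G[T]`
is in BP1. -/
def SBPOn {V : Type*} (G : SimpleGraph V) (s : Set V) : Prop :=
  ∃ S T : Set V, S.Nonempty ∧ T.Nonempty ∧ Disjoint S T ∧ S ∪ T = s ∧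
    (∃ v ∈ S, ∀ u ∈ S, u ≠ v → G.Adj v u) ∧ BP1On G T

def IsStarOn {V : Type*} (G : SimpleGraph V) (S : Set V) : Prop :=
  ∃ v ∈ S, ∀ u ∈ S, u ≠ v → G.Adj v u

section

variable {V : Type*} (G : SimpleGraph V) {s P Q : Set V} {v : V}

lemma isStarOn_singleton (v : V) : IsStarOn G {v} :=
  ⟨v, rfl, fun _ hu hne => absurd hu hne⟩

variable {G}

lemma BP1On.nonempty (h : BP1On G s) : s.Nonempty := by
  rcases h with ⟨v, rfl⟩ | ⟨A, B, ⟨a, ha⟩, -, -, rfl, -⟩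
  exacts [⟨v, rfl⟩, ⟨a, Or.inl ha⟩]

lemma BP2On.nonempty (h : BP2On G s) : s.Nonempty := by
  rcases h with h | ⟨A, B, ⟨a, ha⟩, -, -, rfl, -⟩
  exacts [h.nonempty, ⟨a, Or.inl ha⟩]

lemma nontrivial_of_not_bp1On (hs : s.Nonempty) (h : ¬ BP1On G s) : s.Nontrivial :=
  hs.exists_eq_singleton_or_nontrivial.resolve_left fun hv => h (Or.inl hv)

lemma sbpOn_of_isStarOn (hP : IsStarOn G P) (hQ : BP1On G Q) (hPQ : Disjoint P Q)
    (hs : P ∪ Q = s) : SBPOn G s := by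
  obtain ⟨c, hc, -⟩ := id hP
  exact ⟨P, Q, ⟨c, hc⟩, hQ.nonempty, hPQ, hs, hP, hQ⟩

lemma sbpOn_pair {a b : V} (hab : a ≠ b) : SBPOn G {a, b} :=
  sbpOn_of_isStarOn (isStarOn_singleton G a) (Or.inl ⟨b, rfl⟩)
    (Set.disjoint_singleton.mpr hab) Set.singleton_union

lemma BP1On.diff_singleton (h : BP1On G P) (hv : v ∈ P) :
    IsStarOn G P ∨ BP1On G (P \ {v}) := by
  rcases h with ⟨w, rfl⟩ | ⟨A, B, hA, hB, hAB, rfl, hadj⟩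
  · exact Or.inl (isStarOn_singleton G w)
  wlog hvA : v ∈ A generalizing A B
  · rw [Set.union_comm] at hv ⊢
    exact this B A hB hA hAB.symm (fun b hb a ha => (hadj a ha b hb).symm) hv
      (hv.resolve_right hvA)
  rcases (A \ {v}).eq_empty_or_nonempty with hA' | hA'
  · refine Or.inl ⟨v, Or.inl hvA, fun u hu huv => ?_⟩
    have huA : u ∉ A := fun huA => hA'.subset ⟨huA, huv⟩
    exact hadj v hvA u (hu.resolve_left huA)
  · refine Or.inr (Or.inr ⟨A \ {v}, B, hA', hB, hAB.mono_left Set.sdiff_subset, ?_,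
      fun a ha b hb => hadj a ha.1 b hb⟩)
    rw [Set.union_sdiff_distrib, Set.sdiff_singleton_eq_self (hAB.notMem_of_mem_left hvA)]

lemma not_bp1On_diff_singleton (hv : v ∈ s) (hs : ¬ SBPOn G s) : ¬ BP1On G (s \ {v}) :=
  fun h => hs (sbpOn_of_isStarOn (isStarOn_singleton G v) h Set.disjoint_sdiff_right
    (Set.union_sdiff_cancel (Set.singleton_subset_iff.mpr hv)))

lemma bp2On_diff_singleton (hv : v ∈ s) (h2 : BP2On G s) (h1 : ¬ BP1On G s)
    (hs : ¬ SBPOn G s) : BP2On G (s \ {v}) := by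
  obtain ⟨P, Q, -, -, hPQ, rfl, hP, hQ⟩ := h2.resolve_left h1
  wlog hvP : v ∈ P generalizing P Q
  · rw [Set.union_comm] at hv h2 h1 hs ⊢
    exact this Q P hPQ.symm hv h2 h1 hs hQ hP (hv.resolve_right hvP)
  rcases hP.diff_singleton hvP with hstar | hP'
  · exact absurd (sbpOn_of_isStarOn hstar hQ hPQ rfl) hs
  · refine Or.inr ⟨P \ {v}, Q, hP'.nonempty, hQ.nonempty, hPQ.mono_left Set.sdiff_subset, ?_,
      hP', hQ⟩
    rw [Set.union_sdiff_distrib, Set.sdiff_singleton_eq_self (hPQ.notMem_of_mem_left hvP)]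

end

section Prefix

variable {V : Type*} {l : ℕ} (f : Fin l → V)

lemma ncard_image_prefix (hf : Function.Injective f) {i : ℕ} (hi : i ≤ l) :
    (f '' {j : Fin l | (j : ℕ) < i}).ncard = i := by
  have hrange : {j : Fin l | (j : ℕ) < i} = Set.range (Fin.castLE hi) := by
    ext j
    exact ⟨fun h => ⟨⟨j, h⟩, rfl⟩, by rintro ⟨k, rfl⟩; exact k.2⟩
  rw [Set.ncard_image_of_injective _ hf, hrange, ← Nat.card_coe_set_eq,
    Nat.card_range_of_injective (Fin.castLE_injective hi), Nat.card_fin]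

lemma compl_image_prefix_succ {i : ℕ} (hi : i < l) :
    (f '' {j : Fin l | (j : ℕ) < i + 1})ᶜ = (f '' {j : Fin l | (j : ℕ) < i})ᶜ \ {f ⟨i, hi⟩} := by
  have : {j : Fin l | (j : ℕ) < i + 1} = {j : Fin l | (j : ℕ) < i} ∪ {⟨i, hi⟩} := by
    ext j
    simp only [Set.mem_ofPred_eq, Set.mem_union, Set.mem_singleton_iff, Fin.ext_iff]
    omega
  rw [this, Set.image_union, Set.image_singleton, Set.compl_union, Set.sdiff_eq]

lemma notMem_image_prefix (hf : Function.Injective f) {i : ℕ} (hi : i < l) :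
    f ⟨i, hi⟩ ∉ f '' {j : Fin l | (j : ℕ) < i} := by
  rintro ⟨j, hj, hji⟩
  rw [hf hji] at hj
  exact lt_irrefl i hj

end Prefix

lemma bp2On_and_not_bp1On_compl_image_prefix {V : Type*} {G : SimpleGraph V} {l : ℕ}
    (hbp2 : BP2On G Set.univ) (hnbp1 : ¬ BP1On G Set.univ) (f : Fin l → V)
    (hf : Function.Injective f) (hsbp : ∀ i < l, ¬ SBPOn G (f '' {j : Fin l | (j : ℕ) < i})ᶜ) :
    ∀ i ≤ l, BP2On G (f '' {j : Fin l | (j : ℕ) < i})ᶜ ∧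
      ¬ BP1On G (f '' {j : Fin l | (j : ℕ) < i})ᶜ
  | 0, _ => by simpa using ⟨hbp2, hnbp1⟩
  | i + 1, hi => by
    replace hi : i < l := hi
    obtain ⟨h2, h1⟩ := bp2On_and_not_bp1On_compl_image_prefix hbp2 hnbp1 f hf hsbp i hi.le
    have hv := notMem_image_prefix f hf hi
    rw [compl_image_prefix_succ f hi]
    exact ⟨bp2On_diff_singleton hv h2 h1 (hsbp i hi), not_bp1On_diff_singleton hv (hsbp i hi)⟩

theorem exists_safe_length_general {V : Type*} (G : SimpleGraph V)
    (hbp2 : BP2On G Set.univ) (hnbp1 : ¬ BP1On G Set.univ) :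
    ∃ l : ℕ,
      (∀ f : Fin l → V, Function.Injective f →
        (∀ i : ℕ, i ≤ l →
          BP2On G ((f '' {j : Fin l | (j : ℕ) < i})ᶜ : Set V) ∧
          ¬ BP1On G ((f '' {j : Fin l | (j : ℕ) < i})ᶜ : Set V)) ∧
        (∀ i : ℕ, i < l →
          ¬ SBPOn G ((f '' {j : Fin l | (j : ℕ) < i})ᶜ : Set V))) ∧
      (∃ X : Set V, X.ncard = l ∧ SBPOn G (Xᶜ : Set V)) := by
  classical
  obtain ⟨a, -, b, -, hab⟩ := nontrivial_of_not_bp1On hbp2.nonempty hnbp1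
  have hex : ∃ l : ℕ, ∃ X : Set V, X.ncard = l ∧ SBPOn G (Xᶜ : Set V) :=
    ⟨_, {a, b}ᶜ, rfl, by simpa using sbpOn_pair hab⟩
  have hmin : ∀ f : Fin (Nat.find hex) → V, Function.Injective f →
      ∀ i < Nat.find hex, ¬ SBPOn G (f '' {j | (j : ℕ) < i})ᶜ :=
    fun f hf i hi hS => Nat.find_min hex hi ⟨_, ncard_image_prefix f hf hi.le, hS⟩
  exact ⟨Nat.find hex, fun f hf =>
    ⟨bp2On_and_not_bp1On_compl_image_prefix hbp2 hnbp1 f hf (hmin f hf), hmin f hf⟩,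
    Nat.find_spec hex⟩

/-- For every finite simple graph `G` in BP2 but not in BP1, there is an integer `l ≥ 0`
such that: for every sequence `v_1, …, v_l` of distinct vertices, each graph `G_i`
obtained by deleting `v_1, …, v_i` (for `0 ≤ i ≤ l`) is in BP2 but not in BP1, none of
`G_0, …, G_{l-1}` admits a star-biclique partition; and there exists a set of `l` vertices
whose deletion yields a graph admitting a star-biclique partition. -/
theorem exists_safe_length {V : Type*} [Fintype V] (G : SimpleGraph V)
    (hbp2 : BP2On G Set.univ) (hnbp1 : ¬ BP1On G Set.univ) :
    ∃ l : ℕ,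
      (∀ f : Fin l → V, Function.Injective f →
        (∀ i : ℕ, i ≤ l →
          BP2On G ((f '' {j : Fin l | (j : ℕ) < i})ᶜ : Set V) ∧
          ¬ BP1On G ((f '' {j : Fin l | (j : ℕ) < i})ᶜ : Set V)) ∧
        (∀ i : ℕ, i < l →
          ¬ SBPOn G ((f '' {j : Fin l | (j : ℕ) < i})ᶜ : Set V))) ∧
      (∃ X : Set V, X.ncard = l ∧ SBPOn G (Xᶜ : Set V)) :=
  exists_safe_length_general G hbp2 hnbp1
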